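/- arXiv:math/0208133 — 2 statements merged into one kernel-verified Lean document; each statement's English description precedes it below -/
import Mathlib

section
/- Let K : ℝ → ℝ be continuous and let u : ℝ → ℝ be a C² solution of u'' + K u = 0, not identically zero, with u(a) = u(b) = 0 for some a < b. Then for every ε > 0 there exists a C¹ function f : ℝ → ℝ with compact support contained in (a − ε, b + ε) such that ∫ (f')² < ∫ K f². (A Jacobi field with two zeros forces the index form to be negative on some compactly supported variation.) -/
/-!
Since `u ≢ 0`, uniqueness for the linear equation `u'' = -K u` forces `s := u'(b) ≠ 0`.
Let `χ_h` be a cutoff equal to `1` on `[a, b]`, with ramps of width `h` and slope `O(1/h)`.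
Because `u` is a Jacobi field, integrating by parts gives
`Q(u χ_h) = ∫ (u χ_h')²`, which is `O(h)` as `u` vanishes at `a` and `b`; and for a fixed
bump `ψ` with `ψ(a) = 0`, `ψ(b) = 1`, the polarized index form is
`B(u χ_h, ψ) = -∫ (u'ψ - uψ') χ_h' → u'(b) ψ(b) - u'(a) ψ(a) = s`, since `χ_h' → δ_a - δ_b`.
Hence `Q(u χ_h - δ ψ) → δ² Q(ψ) - 2 δ s`, which is negative for a suitable `δ`.
-/

open MeasureTheory Set Filter Topology Real

noncomputable def cutoff (a b h : ℝ) (t : ℝ) : ℝ :=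
  smoothTransition ((t - a) / h + 1) * smoothTransition ((b - t) / h + 1)

theorem exists_abs_deriv_smoothTransition_le : ∃ M, ∀ x, |deriv smoothTransition x| ≤ M := by
  have hvanish : ∀ x ∉ Ioo (0 : ℝ) 1, deriv smoothTransition x = 0 := by
    intro x hx
    rw [mem_Ioo, not_and_or, not_lt, not_lt] at hx
    rcases hx with hx | hx
    · exact IsLocalMin.deriv_eq_zero <| .of_forall fun _ =>
        (smoothTransition.zero_of_nonpos hx).symm ▸ smoothTransition.nonneg _
    · exact IsLocalMax.deriv_eq_zero <| .of_forall fun _ =>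
        (smoothTransition.one_of_one_le hx).symm ▸ smoothTransition.le_one _
  have hsupp : HasCompactSupport (deriv smoothTransition) :=
    HasCompactSupport.intro isCompact_Icc fun x hx => hvanish x fun h => hx (Ioo_subset_Icc_self h)
  exact (smoothTransition.contDiff (n := 1)).continuous_deriv le_rfl
    |>.bounded_above_of_compact_support hsupp

section Cutoff

variable {a b h t : ℝ}

theorem contDiff_cutoff {n : ℕ∞} : ContDiff ℝ n (cutoff a b h) :=
  (smoothTransition.contDiff.comp (by fun_prop)).mul (smoothTransition.contDiff.comp (by fun_prop))

theorem continuous_deriv_cutoff : Continuous (deriv (cutoff a b h)) :=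
  (contDiff_cutoff (n := 1)).continuous_deriv le_rfl

theorem cutoff_nonneg : 0 ≤ cutoff a b h t :=
  mul_nonneg (smoothTransition.nonneg _) (smoothTransition.nonneg _)

theorem cutoff_le_one : cutoff a b h t ≤ 1 :=
  mul_le_one₀ (smoothTransition.le_one _) (smoothTransition.nonneg _) (smoothTransition.le_one _)

theorem cutoff_eq_one (hh : 0 < h) (ht : t ∈ Icc a b) : cutoff a b h t = 1 := by
  have h₁ : 0 ≤ (t - a) / h := div_nonneg (by linarith [ht.1]) hh.le
  have h₂ : 0 ≤ (b - t) / h := div_nonneg (by linarith [ht.2]) hh.le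
  simp only [cutoff, smoothTransition.one_of_one_le (by linarith : 1 ≤ (t - a) / h + 1),
    smoothTransition.one_of_one_le (by linarith : 1 ≤ (b - t) / h + 1), mul_one]

theorem cutoff_eq_zero (hh : 0 < h) (ht : t ∉ Ioo (a - h) (b + h)) : cutoff a b h t = 0 := by
  rw [mem_Ioo, not_and_or, not_lt, not_lt] at ht
  rcases ht with ht | ht
  · have : (t - a) / h + 1 ≤ 0 := by
      rw [div_add_one hh.ne', div_nonpos_iff]; right; constructor <;> linarith
    simp [cutoff, smoothTransition.zero_of_nonpos this]
  · have : (b - t) / h + 1 ≤ 0 := by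
      rw [div_add_one hh.ne', div_nonpos_iff]; right; constructor <;> linarith
    simp [cutoff, smoothTransition.zero_of_nonpos this]

theorem hasCompactSupport_cutoff (hh : 0 < h) : HasCompactSupport (cutoff a b h) :=
  HasCompactSupport.intro isCompact_Icc fun _ ht =>
    cutoff_eq_zero hh fun h' => ht (Ioo_subset_Icc_self h')

theorem deriv_cutoff_of_mem_Icc (hh : 0 < h) (ht : t ∈ Icc a b) : deriv (cutoff a b h) t = 0 :=
  IsLocalMax.deriv_eq_zero <| .of_forall fun _ => (cutoff_eq_one hh ht).symm ▸ cutoff_le_one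

theorem deriv_cutoff_of_notMem_Ioo (hh : 0 < h) (ht : t ∉ Ioo (a - h) (b + h)) :
    deriv (cutoff a b h) t = 0 :=
  IsLocalMin.deriv_eq_zero <| .of_forall fun _ => (cutoff_eq_zero hh ht).symm ▸ cutoff_nonneg

end Cutoff

theorem exists_abs_deriv_cutoff_le :
    ∃ C, 0 ≤ C ∧ ∀ a b h t : ℝ, 0 < h → |deriv (cutoff a b h) t| ≤ C / h := by
  obtain ⟨M, hM⟩ := exists_abs_deriv_smoothTransition_le
  refine ⟨2 * M, by linarith [hM 0, abs_nonneg (deriv smoothTransition 0)],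
    fun a b h t hh => ?_⟩
  have hT : ∀ x, HasDerivAt smoothTransition (deriv smoothTransition x) x := fun x =>
    ((smoothTransition.contDiff (n := 1)).differentiable one_ne_zero x).hasDerivAt
  have h₁ : HasDerivAt (fun t => (t - a) / h + 1) (1 / h) t := by
    simpa using (((hasDerivAt_id t).sub_const a).div_const h).add_const 1
  have h₂ : HasDerivAt (fun t => (b - t) / h + 1) (-1 / h) t := by
    simpa using (((hasDerivAt_id t).const_sub b).div_const h).add_const 1
  have hd : HasDerivAt (cutoff a b h) _ t := ((hT _).comp t h₁).mul ((hT _).comp t h₂)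
  rw [hd.deriv]
  have hT_abs : ∀ x, |smoothTransition x| ≤ 1 := fun x =>
    abs_le.2 ⟨by linarith [smoothTransition.nonneg x], smoothTransition.le_one x⟩
  simp only [Function.comp_apply]
  calc _ ≤ |deriv smoothTransition ((t - a) / h + 1)| * (1 / h) * 1
        + 1 * (|deriv smoothTransition ((b - t) / h + 1)| * (1 / h)) := by
        refine (abs_add_le _ _).trans ?_
        simp only [abs_mul, abs_div, abs_neg, abs_one, abs_of_pos hh]
        gcongr <;> apply hT_abs
    _ ≤ M * (1 / h) * 1 + 1 * (M * (1 / h)) := by gcongr <;> apply hM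
    _ = 2 * M / h := by ring

theorem ContinuousAt.eventually_abs_sub_le {g : ℝ → ℝ} {c η : ℝ} (hg : ContinuousAt g c)
    (hη : 0 < η) : ∀ᶠ h in 𝓝 (0 : ℝ), ∀ t ∈ Icc (c - h) (c + h), |g t - g c| ≤ η := by
  obtain ⟨ρ, hρ, H⟩ := Metric.continuousAt_iff.1 hg η hη
  filter_upwards [Ioo_mem_nhds (neg_lt_zero.2 hρ) hρ] with h hh t ht
  refine (H ?_).le
  rw [Real.dist_eq, abs_lt]
  constructor <;> linarith [hh.1, hh.2, ht.1, ht.2]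

theorem abs_intervalIntegral_le_of_abs_le {F : ℝ → ℝ} {x y B : ℝ} (hxy : x ≤ y)
    (hF : ∀ t ∈ Icc x y, |F t| ≤ B) : |∫ t in x..y, F t| ≤ B * (y - x) := by
  simpa [abs_of_nonneg (sub_nonneg.2 hxy)] using
    intervalIntegral.norm_integral_le_of_norm_le_const (f := F) fun t ht =>
      hF t (Ioc_subset_Icc_self (uIoc_of_le hxy ▸ ht))

theorem abs_intervalIntegral_mul_deriv_sub_le {g χ : ℝ → ℝ} {x y c η D : ℝ} (hxy : x ≤ y)
    (hg : Continuous g) (hχ : ContDiff ℝ 1 χ) (hgη : ∀ t ∈ Icc x y, |g t - g c| ≤ η)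
    (hχD : ∀ t ∈ Icc x y, |deriv χ t| ≤ D) :
    |(∫ t in x..y, g t * deriv χ t) - g c * (χ y - χ x)| ≤ η * D * (y - x) := by
  have hχ' := hχ.continuous_deriv le_rfl
  have hFTC : ∫ t in x..y, deriv χ t = χ y - χ x :=
    intervalIntegral.integral_deriv_eq_sub (fun t _ => hχ.differentiable one_ne_zero t)
      (hχ'.intervalIntegrable _ _)
  rw [← hFTC, ← intervalIntegral.integral_const_mul, ← intervalIntegral.integral_sub
    ((by fun_prop : Continuous fun t => g t * deriv χ t).intervalIntegrable _ _)
    ((by fun_prop : Continuous fun t => g c * deriv χ t).intervalIntegrable _ _)]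
  refine abs_intervalIntegral_le_of_abs_le hxy fun t ht => ?_
  rw [← sub_mul, abs_mul]
  exact mul_le_mul (hgη t ht) (hχD t ht) (abs_nonneg _) ((abs_nonneg _).trans (hgη t ht))

-- The derivative of `cutoff a b h` lives on the two ramps `[a - h, a]` and `[b, b + h]`.
theorem integral_eq_add_of_deriv_cutoff {F : ℝ → ℝ} {a b h : ℝ} (hab : a ≤ b) (hh : 0 < h)
    (hF : Continuous F) (hF0 : ∀ t, deriv (cutoff a b h) t = 0 → F t = 0) :
    ∫ t, F t = (∫ t in (a - h)..a, F t) + ∫ t in b..(b + h), F t := by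
  have hout : ∀ t ∉ Icc (a - h) (b + h), F t = 0 := fun t ht =>
    hF0 t (deriv_cutoff_of_notMem_Ioo hh fun h' => ht (Ioo_subset_Icc_self h'))
  have hmid : ∫ t in a..b, F t = 0 := by
    rw [intervalIntegral.integral_congr (g := fun _ => 0) fun t ht =>
      hF0 t (deriv_cutoff_of_mem_Icc hh (uIcc_of_le hab ▸ ht))]
    simp
  have hi : ∀ x y, IntervalIntegrable F volume x y := fun _ _ => hF.intervalIntegrable _ _
  rw [← setIntegral_eq_integral_of_forall_compl_eq_zero hout, integral_Icc_eq_integral_Ioc,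
    ← intervalIntegral.integral_of_le (by linarith),
    ← intervalIntegral.integral_add_adjacent_intervals (hi _ a) (hi a _),
    ← intervalIntegral.integral_add_adjacent_intervals (hi a b) (hi b _), hmid, zero_add]

theorem tendsto_integral_mul_deriv_cutoff {g : ℝ → ℝ} {a b : ℝ} (hg : Continuous g)
    (hab : a ≤ b) :
    Tendsto (fun h => ∫ t, g t * deriv (cutoff a b h) t) (𝓝[>] 0) (𝓝 (g a - g b)) := by
  obtain ⟨C, hC0, hC⟩ := exists_abs_deriv_cutoff_le
  rw [Metric.tendsto_nhds]
  intro η hη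
  have hη' : 0 < η / (2 * C + 1) := by positivity
  have hsmall : 2 * (η / (2 * C + 1) * C) < η := by
    rw [div_mul_eq_mul_div, ← mul_div_assoc, div_lt_iff₀ (by positivity)]
    nlinarith
  filter_upwards [self_mem_nhdsWithin,
    nhdsWithin_le_nhds (hg.continuousAt (x := a) |>.eventually_abs_sub_le hη'),
    nhdsWithin_le_nhds (hg.continuousAt (x := b) |>.eventually_abs_sub_le hη')]
    with h (hh : 0 < h) hga hgb
  rw [integral_eq_add_of_deriv_cutoff (F := fun t => g t * deriv (cutoff a b h) t) hab hh
    (hg.mul continuous_deriv_cutoff) fun t ht => by simp [ht]]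
  have eA := abs_intervalIntegral_mul_deriv_sub_le (c := a) (by linarith : a - h ≤ a) hg
    contDiff_cutoff (fun t ht => hga t ⟨ht.1, by linarith [ht.2]⟩) (fun t _ => hC a b h t hh)
  have eB := abs_intervalIntegral_mul_deriv_sub_le (c := b) (by linarith : b ≤ b + h) hg
    contDiff_cutoff (fun t ht => hgb t ⟨by linarith [ht.1], ht.2⟩) (fun t _ => hC a b h t hh)
  rw [cutoff_eq_one hh ⟨le_rfl, hab⟩, cutoff_eq_zero hh (by simp)] at eA
  rw [cutoff_eq_one hh ⟨hab, le_rfl⟩, cutoff_eq_zero hh (by simp)] at eB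
  have hw : η / (2 * C + 1) * (C / h) * h = η / (2 * C + 1) * C := by field_simp
  rw [show a - (a - h) = h by ring, hw] at eA
  rw [show b + h - b = h by ring, hw] at eB
  rw [Real.dist_eq, abs_lt]
  constructor <;> linarith [abs_le.1 eA, abs_le.1 eB]

-- Near a zero `c` of `u`, the bound `|u| ≤ L h` compensates a slope of size `C / h`.
theorem abs_mul_le_of_lipschitzOnWith {u : ℝ → ℝ} {s : Set ℝ} {L : NNReal} {c t h y C : ℝ}
    (hL : LipschitzOnWith L u s) (hc : c ∈ s) (ht : t ∈ s) (huc : u c = 0) (htc : |t - c| ≤ h)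
    (hh : 0 < h) (hy : |y| ≤ C / h) : |u t * y| ≤ L * C := by
  have hut : |u t| ≤ L * h := by
    have := hL.dist_le_mul t ht c hc
    rw [Real.dist_eq, Real.dist_eq, huc, sub_zero] at this
    exact this.trans (by gcongr)
  rw [abs_mul]
  calc _ ≤ L * h * (C / h) := by gcongr
    _ = L * C := by field_simp

theorem tendsto_integral_sq_mul_deriv_cutoff {u : ℝ → ℝ} {a b : ℝ} (hu : ContDiff ℝ 1 u)
    (ha : u a = 0) (hb : u b = 0) (hab : a ≤ b) :
    Tendsto (fun h => ∫ t, (u t * deriv (cutoff a b h) t) ^ 2) (𝓝[>] 0) (𝓝 0) := by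
  obtain ⟨C, hC0, hC⟩ := exists_abs_deriv_cutoff_le
  obtain ⟨L, hL⟩ := (hu.contDiffOn (s := Icc (a - 1) (b + 1))).exists_lipschitzOnWith
    one_ne_zero (convex_Icc _ _) isCompact_Icc
  have hpt : ∀ h ∈ Ioo (0 : ℝ) 1, ∀ c ∈ Icc a b, u c = 0 → ∀ t ∈ Icc (c - h) (c + h),
      |(u t * deriv (cutoff a b h) t) ^ 2| ≤ (L * C) ^ 2 := by
    rintro h ⟨hh, hh1⟩ c hc huc t ht
    rw [abs_pow]
    gcongr
    exact abs_mul_le_of_lipschitzOnWith hL ⟨by linarith [hc.1], by linarith [hc.2]⟩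
      ⟨by linarith [ht.1, hc.1], by linarith [ht.2, hc.2]⟩ huc
      (abs_le.2 ⟨by linarith [ht.1], by linarith [ht.2]⟩) hh (hC a b h t hh)
  have hbound : ∀ h ∈ Ioo (0 : ℝ) 1,
      ∫ t, (u t * deriv (cutoff a b h) t) ^ 2 ≤ 2 * (L * C) ^ 2 * h := by
    intro h hh
    rw [integral_eq_add_of_deriv_cutoff (F := fun t => (u t * deriv (cutoff a b h) t) ^ 2) hab
      hh.1 ((hu.continuous.mul continuous_deriv_cutoff).pow 2) fun t ht => by simp [ht]]
    have eA := abs_intervalIntegral_le_of_abs_le (by linarith [hh.1] : a - h ≤ a) fun t ht =>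
      hpt h hh a ⟨le_rfl, hab⟩ ha t ⟨ht.1, by linarith [ht.2, hh.1]⟩
    have eB := abs_intervalIntegral_le_of_abs_le (by linarith [hh.1] : b ≤ b + h) fun t ht =>
      hpt h hh b ⟨hab, le_rfl⟩ hb t ⟨by linarith [ht.1, hh.1], ht.2⟩
    linarith [le_abs_self (∫ t in (a - h)..a, (u t * deriv (cutoff a b h) t) ^ 2),
      le_abs_self (∫ t in b..(b + h), (u t * deriv (cutoff a b h) t) ^ 2)]
  have hlim : Tendsto (fun h : ℝ => 2 * (L * C) ^ 2 * h) (𝓝[>] 0) (𝓝 0) := by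
    simpa using (tendsto_nhdsWithin_of_tendsto_nhds (s := Ioi 0)
      (tendsto_id (x := 𝓝 (0 : ℝ)))).const_mul (2 * (L * C) ^ 2)
  refine tendsto_of_tendsto_of_tendsto_of_le_of_le' tendsto_const_nhds hlim
    (.of_forall fun h => integral_nonneg fun t => sq_nonneg _) ?_
  filter_upwards [Ioo_mem_nhdsGT one_pos] with h hh using hbound h hh

theorem eq_zero_of_jacobi_of_deriv_eq_zero {K u : ℝ → ℝ} {b : ℝ} (hK : Continuous K)
    (hu : ContDiff ℝ 2 u) (hJ : ∀ t, deriv (deriv u) t + K t * u t = 0) (hb : u b = 0) (hb' : deriv u b = 0) :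
    u = 0 := by
  funext c
  obtain ⟨A, B, hcAB, hbAB⟩ : ∃ A B, c ∈ Ioo A B ∧ b ∈ Ioo A B :=
    ⟨min b c - 1, max b c + 1, by grind⟩
  obtain ⟨M, hM⟩ := isCompact_Icc.exists_bound_of_continuousOn (hK.continuousOn (s := Icc A B))
  have hv : ∀ t ∈ Ioo A B,
      LipschitzOnWith (max 1 M.toNNReal) (fun p : ℝ × ℝ => (p.2, -K t * p.1)) univ := by
    intro t ht
    refine (LipschitzWith.prod_snd.prodMk
      ((lipschitzWith_smul (-K t)).comp LipschitzWith.prod_fst)).weaken ?_ |>.lipschitzOnWith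
    rw [mul_one, nnnorm_neg]
    gcongr
    rw [← NNReal.coe_le_coe, coe_nnnorm, Real.coe_toNNReal']
    exact (hM t (Ioo_subset_Icc_self ht)).trans (le_max_left _ _)
  have hu' : ContDiff ℝ 1 (deriv u) := hu.deriv'
  have hsol : ∀ t ∈ Ioo A B, HasDerivAt (fun t => (u t, deriv u t))
      (deriv u t, -K t * u t) t ∧ (u t, deriv u t) ∈ (univ : Set (ℝ × ℝ)) := by
    refine fun t _ => ⟨?_, trivial⟩
    have := (hu.differentiable two_ne_zero t).hasDerivAt.prodMk
      (hu'.differentiable one_ne_zero t).hasDerivAt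
    rwa [show deriv (deriv u) t = -K t * u t by linarith [hJ t]] at this
  have hzero : ∀ t ∈ Ioo A B, HasDerivAt (fun _ => (0 : ℝ × ℝ))
      ((0 : ℝ × ℝ).2, -K t * (0 : ℝ × ℝ).1) t ∧ (0 : ℝ × ℝ) ∈ univ :=
    fun t _ => ⟨(hasDerivAt_const t (0 : ℝ × ℝ)).congr_deriv (by ext <;> simp), trivial⟩
  have := ODE_solution_unique_of_mem_Ioo hv hbAB hsol hzero (by simp [hb, hb']) hcAB
  simpa using congrArg Prod.fst this

theorem integral_eq_zero_of_hasDerivAt_of_hasCompactSupport {W G : ℝ → ℝ}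
    (hW : ∀ t, HasDerivAt W (G t) t) (hG : Continuous G) (hWc : HasCompactSupport W) :
    ∫ t, G t = 0 := by
  have hGW : deriv W = G := funext fun t => (hW t).deriv
  refine integral_eq_zero_of_hasDerivAt_of_integrable hW
    (hG.integrable_of_hasCompactSupport (hGW ▸ hWc.deriv)) ?_
  exact (continuous_iff_continuousAt.2 fun t => (hW t).continuousAt).integrable_of_hasCompactSupport
    hWc

noncomputable def indexForm (K f g : ℝ → ℝ) : ℝ :=
  ∫ t, (deriv f t * deriv g t - K t * f t * g t)

section IndexForm

variable {K f g u χ ψ : ℝ → ℝ}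

theorem integrable_indexForm_integrand (hK : Continuous K) (hf : ContDiff ℝ 1 f)
    (hg : ContDiff ℝ 1 g) (hgc : HasCompactSupport g) :
    Integrable fun t => deriv f t * deriv g t - K t * f t * g t := by
  have := hf.continuous_deriv le_rfl
  have := hg.continuous_deriv le_rfl
  have := hf.continuous
  have := hg.continuous
  exact Continuous.integrable_of_hasCompactSupport (by fun_prop)
    (hgc.deriv.mul_left.sub hgc.mul_left)

theorem indexForm_self (hK : Continuous K) (hf : ContDiff ℝ 1 f) (hfc : HasCompactSupport f) :
    indexForm K f f = (∫ t, deriv f t ^ 2) - ∫ t, K t * f t ^ 2 := by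
  have := hf.continuous_deriv le_rfl
  have := hf.continuous
  have hL : Integrable fun t => deriv f t * deriv f t :=
    Continuous.integrable_of_hasCompactSupport (by fun_prop) hfc.deriv.mul_left
  have hR : Integrable fun t => K t * (f t * f t) :=
    Continuous.integrable_of_hasCompactSupport (by fun_prop) hfc.mul_left.mul_left
  simp only [sq]
  rw [← integral_sub hL hR]
  simp only [indexForm, mul_assoc]

theorem indexForm_sub_mul_self (hK : Continuous K) (hf : ContDiff ℝ 1 f)
    (hfc : HasCompactSupport f) (hg : ContDiff ℝ 1 g) (hgc : HasCompactSupport g) (δ : ℝ) :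
    indexForm K (fun t => f t - δ * g t) (fun t => f t - δ * g t)
      = indexForm K f f - 2 * δ * indexForm K f g + δ ^ 2 * indexForm K g g := by
  have hd : deriv (fun t => f t - δ * g t) = fun t => deriv f t - δ * deriv g t :=
    funext fun t => ((hf.differentiable one_ne_zero t).hasDerivAt.sub
      ((hg.differentiable one_ne_zero t).hasDerivAt.const_mul δ)).deriv
  have hff := integrable_indexForm_integrand hK hf hf hfc
  have hfg := (integrable_indexForm_integrand hK hf hg hgc).const_mul (2 * δ)
  have hgg := (integrable_indexForm_integrand hK hg hg hgc).const_mul (δ ^ 2)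
  simp only [indexForm, hd, ← integral_const_mul]
  rw [← integral_sub hff hfg, ← integral_add ?_ hgg]
  · congr 1 with t
    ring
  exact hff.sub hfg

-- `(u u' χ²)' = (u χ)'² - K (u χ)² - (u χ')²` for a Jacobi field `u`.
theorem indexForm_mul_self_of_jacobi (hK : Continuous K) (hu : ContDiff ℝ 2 u)
    (hJ : ∀ t, deriv (deriv u) t + K t * u t = 0) (hχ : ContDiff ℝ 1 χ)
    (hχc : HasCompactSupport χ) :
    indexForm K (fun t => u t * χ t) (fun t => u t * χ t) = ∫ t, (u t * deriv χ t) ^ 2 := by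
  have hu' : ContDiff ℝ 1 (deriv u) := hu.deriv'
  have := hu'.continuous_deriv le_rfl
  have := hu'.continuous
  have := hu.continuous
  have := hχ.continuous_deriv le_rfl
  have := hχ.continuous
  have huχ : ContDiff ℝ 1 (fun t => u t * χ t) := (hu.of_le (by norm_num)).mul hχ
  have hd : deriv (fun t => u t * χ t) = fun t => deriv u t * χ t + u t * deriv χ t :=
    funext fun t => ((hu.differentiable two_ne_zero t).hasDerivAt.mul
      (hχ.differentiable one_ne_zero t).hasDerivAt).deriv
  have hI := integrable_indexForm_integrand hK huχ huχ hχc.mul_left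
  have hR : Integrable fun t => (u t * deriv χ t) * (u t * deriv χ t) :=
    Continuous.integrable_of_hasCompactSupport (by fun_prop) hχc.deriv.mul_left.mul_left
  simp only [sq]
  rw [← sub_eq_zero, indexForm, ← integral_sub hI hR]
  refine integral_eq_zero_of_hasDerivAt_of_hasCompactSupport
    (W := fun t => u t * deriv u t * (χ t * χ t)) (fun t => ?_) (by simp only [hd]; fun_prop)
    hχc.mul_left.mul_left
  have hW := ((hu.differentiable two_ne_zero t).hasDerivAt.mul
    (hu'.differentiable one_ne_zero t).hasDerivAt).mul
    ((hχ.differentiable one_ne_zero t).hasDerivAt.mul (hχ.differentiable one_ne_zero t).hasDerivAt)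
  refine hW.congr_deriv ?_
  rw [hd, show deriv (deriv u) t = -(K t * u t) by linarith [hJ t]]
  simp only [Pi.mul_apply]
  ring

-- `(u' χ ψ)' = (u χ)' ψ' - K u χ ψ + (u' ψ - u ψ') χ'` for a Jacobi field `u`.
theorem indexForm_mul_of_jacobi (hK : Continuous K) (hu : ContDiff ℝ 2 u)
    (hJ : ∀ t, deriv (deriv u) t + K t * u t = 0) (hχ : ContDiff ℝ 1 χ)
    (hψ : ContDiff ℝ 1 ψ) (hψc : HasCompactSupport ψ) :
    indexForm K (fun t => u t * χ t) ψ
      = -∫ t, (deriv u t * ψ t - u t * deriv ψ t) * deriv χ t := by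
  have hu' : ContDiff ℝ 1 (deriv u) := hu.deriv'
  have := hu'.continuous_deriv le_rfl
  have := hu'.continuous
  have := hu.continuous
  have := hχ.continuous_deriv le_rfl
  have := hχ.continuous
  have := hψ.continuous_deriv le_rfl
  have := hψ.continuous
  have huχ : ContDiff ℝ 1 (fun t => u t * χ t) := (hu.of_le (by norm_num)).mul hχ
  have hd : deriv (fun t => u t * χ t) = fun t => deriv u t * χ t + u t * deriv χ t :=
    funext fun t => ((hu.differentiable two_ne_zero t).hasDerivAt.mul
      (hχ.differentiable one_ne_zero t).hasDerivAt).deriv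
  have hI := integrable_indexForm_integrand hK huχ hψ hψc
  have hR : Integrable fun t => (deriv u t * ψ t - u t * deriv ψ t) * deriv χ t :=
    Continuous.integrable_of_hasCompactSupport (by fun_prop)
      (hψc.mul_left.sub hψc.deriv.mul_left).mul_right
  rw [← sub_eq_zero, sub_neg_eq_add, indexForm, ← integral_add hI hR]
  refine integral_eq_zero_of_hasDerivAt_of_hasCompactSupport
    (W := fun t => deriv u t * χ t * ψ t) (fun t => ?_) (by simp only [hd]; fun_prop)
    hψc.mul_left
  have hW := ((hu'.differentiable one_ne_zero t).hasDerivAt.mul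
    (hχ.differentiable one_ne_zero t).hasDerivAt).mul (hψ.differentiable one_ne_zero t).hasDerivAt
  refine hW.congr_deriv ?_
  rw [hd, show deriv (deriv u) t = -(K t * u t) by linarith [hJ t]]
  simp only [Pi.mul_apply]
  ring

theorem tendsto_indexForm_mul_cutoff_sub_of_jacobi {a b : ℝ} (hK : Continuous K)
    (hu : ContDiff ℝ 2 u) (hJ : ∀ t, deriv (deriv u) t + K t * u t = 0) (hab : a ≤ b)
    (ha : u a = 0) (hb : u b = 0) (hψ : ContDiff ℝ 1 ψ) (hψc : HasCompactSupport ψ) (δ : ℝ) :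
    Tendsto (fun h => indexForm K (fun t => u t * cutoff a b h t - δ * ψ t)
        (fun t => u t * cutoff a b h t - δ * ψ t)) (𝓝[>] 0)
      (𝓝 (δ ^ 2 * indexForm K ψ ψ - 2 * δ * (deriv u b * ψ b - deriv u a * ψ a))) := by
  have hu₁ : ContDiff ℝ 1 u := hu.of_le (by norm_num)
  have hW : Continuous fun t => deriv u t * ψ t - u t * deriv ψ t :=
    ((hu.continuous_deriv (by norm_num)).mul hψ.continuous).sub
      (hu.continuous.mul (hψ.continuous_deriv le_rfl))
  have hlim := ((tendsto_integral_sq_mul_deriv_cutoff hu₁ ha hb hab).sub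
    ((tendsto_integral_mul_deriv_cutoff hW hab).neg.const_mul (2 * δ))).add_const
    (δ ^ 2 * indexForm K ψ ψ)
  rw [show (0 : ℝ) - 2 * δ * -(deriv u a * ψ a - u a * deriv ψ a
      - (deriv u b * ψ b - u b * deriv ψ b)) + δ ^ 2 * indexForm K ψ ψ
      = δ ^ 2 * indexForm K ψ ψ - 2 * δ * (deriv u b * ψ b - deriv u a * ψ a) by
    rw [ha, hb]; ring] at hlim
  refine hlim.congr' (eventually_mem_nhdsWithin.mono fun h (hh : 0 < h) => ?_)
  beta_reduce
  rw [indexForm_sub_mul_self hK (hu₁.mul contDiff_cutoff) (hasCompactSupport_cutoff hh).mul_left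
      hψ hψc,
    indexForm_mul_self_of_jacobi hK hu hJ contDiff_cutoff (hasCompactSupport_cutoff hh),
    indexForm_mul_of_jacobi hK hu hJ contDiff_cutoff hψ hψc]

end IndexForm

theorem exists_contDiff_bump_eq_zero_eq_one {a b ε : ℝ} (hab : a < b) (hε : 0 < ε) :
    ∃ ψ : ℝ → ℝ, ContDiff ℝ 1 ψ ∧ HasCompactSupport ψ ∧ ψ a = 0 ∧ ψ b = 1 ∧
      ∀ t ∉ Ioo a (b + ε), ψ t = 0 := by
  obtain ⟨r, hr, hrε, hrab⟩ : ∃ r > 0, r ≤ ε ∧ r ≤ b - a :=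
    ⟨min ε (b - a), lt_min hε (sub_pos.2 hab), min_le_left _ _, min_le_right _ _⟩
  refine ⟨cutoff b b r, contDiff_cutoff, hasCompactSupport_cutoff hr,
    cutoff_eq_zero hr fun h => by linarith [h.1], cutoff_eq_one hr ⟨le_rfl, le_rfl⟩,
    fun t ht => cutoff_eq_zero hr fun h => ht ⟨by linarith [h.1], by linarith [h.2]⟩⟩

theorem exists_sq_mul_sub_two_mul_neg (q : ℝ) {s : ℝ} (hs : s ≠ 0) :
    ∃ δ : ℝ, δ ^ 2 * q - 2 * δ * s < 0 := by
  have hq : 0 < |q| + 1 := by positivity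
  refine ⟨s / (|q| + 1), ?_⟩
  have key : (s / (|q| + 1)) ^ 2 * q - 2 * (s / (|q| + 1)) * s
      = s ^ 2 * (q - 2 * (|q| + 1)) / (|q| + 1) ^ 2 := by
    field_simp
  rw [key]
  exact div_neg_of_neg_of_pos
    (mul_neg_of_pos_of_neg (by positivity) (by linarith [le_abs_self q])) (by positivity)

/-- A Jacobi field with two zeros forces the index form to be negative on
a compactly supported variation supported near the two zeros. -/
theorem stmt7 (K u : ℝ → ℝ) (hK : Continuous K) (hu : ContDiff ℝ 2 u)
    (hJ : ∀ t, deriv (deriv u) t + K t * u t = 0) (hne : u ≠ 0)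
    (a b : ℝ) (hab : a < b) (ha : u a = 0) (hb : u b = 0) :
    ∀ ε > 0, ∃ f : ℝ → ℝ, ContDiff ℝ 1 f ∧ HasCompactSupport f ∧
      tsupport f ⊆ Set.Ioo (a - ε) (b + ε) ∧
      (∫ t, (deriv f t) ^ 2) < ∫ t, K t * (f t) ^ 2 := by
  intro ε hε
  have hs : deriv u b ≠ 0 := fun h0 => hne (eq_zero_of_jacobi_of_deriv_eq_zero hK hu hJ hb h0)
  obtain ⟨ψ, hψ, hψc, hψa, hψb, hψ0⟩ := exists_contDiff_bump_eq_zero_eq_one hab (half_pos hε)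
  obtain ⟨δ, hδ⟩ := exists_sq_mul_sub_two_mul_neg (indexForm K ψ ψ) hs
  have hlim := tendsto_indexForm_mul_cutoff_sub_of_jacobi hK hu hJ hab.le ha hb hψ hψc δ
  rw [hψa, hψb, mul_one, mul_zero, sub_zero] at hlim
  obtain ⟨h, hneg, hh, hhε⟩ :=
    ((hlim.eventually (gt_mem_nhds hδ)).and (Ioo_mem_nhdsGT (half_pos hε))).exists
  have hvanish : ∀ t ∉ Icc (a - ε / 2) (b + ε / 2), u t * cutoff a b h t - δ * ψ t = 0 := by
    intro t ht
    rw [cutoff_eq_zero hh fun h' => ht ⟨by linarith [h'.1], by linarith [h'.2]⟩,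
      hψ0 t fun h' => ht ⟨by linarith [h'.1], by linarith [h'.2]⟩]
    ring
  have hf : ContDiff ℝ 1 fun t => u t * cutoff a b h t - δ * ψ t :=
    ((hu.of_le (by norm_num)).mul contDiff_cutoff).sub (contDiff_const.mul hψ)
  have hfc := HasCompactSupport.intro isCompact_Icc hvanish
  refine ⟨_, hf, hfc, (closure_minimal (Function.support_subset_iff'.2 hvanish) isClosed_Icc).trans
    (Icc_subset_Ioo (by linarith) (by linarith)), ?_⟩
  rw [← sub_neg, ← indexForm_self hK hf hfc]
  exact hneg
end

section
/- Let K : ℝ → ℝ be continuous. Suppose that no C² solution u of u'' + K u = 0 other than the zero solution has two distinct zeros. Then for every C¹ function f : ℝ → ℝ with compact support, ∫ K f² ≤ ∫ (f')². (A complete geodesic with no Jacobi field having more than one zero is stable.) -/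
/-!
Let `u` be the Jacobi field with `u a₀ = 0`, `u' a₀ = 1`, where `a₀` lies to the left of the
support of `f`. By hypothesis `u` has no other zero, so on an interval `[c, d]` containing the
support Picone's identity `f'² - K f² = (f' - u' f / u)² + (u' f² / u)'` integrates to
`∫ (f'² - K f²) ≥ 0`.

The Jacobi field exists because linear ODEs with continuous coefficients have global solutions:
on a compact time interval the operator norm is bounded, so Picard–Lindelöf gives solutions on
steps of a uniform length, which glue; the solutions on growing intervals agree by uniqueness.
-/

open MeasureTheory

open Set

section IntegralCurve

variable {E : Type*} [NormedAddCommGroup E] [NormedSpace ℝ E] {v : ℝ → E → E}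

theorem IsIntegralCurveOn.hasDerivWithinAt_of_eqOn {γ γ' : ℝ → E} {s : Set ℝ}
    (h : IsIntegralCurveOn γ' v s) (hs : IsClosed s) (heq : EqOn γ γ' s) (t : ℝ) :
    HasDerivWithinAt γ (v t (γ t)) s t := by
  by_cases ht : t ∈ s
  · rw [heq ht]
    exact (h t ht).congr heq (heq ht)
  · rw [hasDerivWithinAt_iff_hasFDerivWithinAt]
    exact .of_notMem_closure (by rwa [hs.closure_eq])

theorem IsIntegralCurveOn.piecewise_Icc {γ₁ γ₂ : ℝ → E} {a b c : ℝ} (hab : a ≤ b) (hbc : b ≤ c)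
    (h₁ : IsIntegralCurveOn γ₁ v (Icc a b)) (h₂ : IsIntegralCurveOn γ₂ v (Icc b c))
    (hb : γ₁ b = γ₂ b) :
    IsIntegralCurveOn (piecewise (Iic b) γ₁ γ₂) v (Icc a c) := by
  have heq₁ : EqOn (piecewise (Iic b) γ₁ γ₂) γ₁ (Icc a b) := fun t ht => if_pos ht.2
  have heq₂ : EqOn (piecewise (Iic b) γ₁ γ₂) γ₂ (Icc b c) := by
    intro t ht
    rcases ht.1.eq_or_lt with rfl | hlt
    · exact (if_pos (mem_Iic.2 le_rfl)).trans hb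
    · exact if_neg hlt.not_ge
  rw [← Icc_union_Icc_eq_Icc hab hbc]
  exact fun t _ => (h₁.hasDerivWithinAt_of_eqOn isClosed_Icc heq₁ t).union
    (h₂.hasDerivWithinAt_of_eqOn isClosed_Icc heq₂ t)

end IntegralCurve

section LinearODE

variable {E : Type*} [NormedAddCommGroup E] [NormedSpace ℝ E] {A : ℝ → E →L[ℝ] E}

theorem exists_isIntegralCurveOn_Icc_of_opNorm_le [CompleteSpace E] (hA : Continuous A)
    {a b M : ℝ} (hab : a ≤ b) (hM : ∀ t ∈ Icc a b, ‖A t‖ ≤ M) (hMab : M * (b - a) ≤ 1 / 2)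
    (x₀ : E) : ∃ α : ℝ → E, α a = x₀ ∧ IsIntegralCurveOn α (fun t x => A t x) (Icc a b) := by
  have hM₀ : 0 ≤ M := (norm_nonneg _).trans (hM a (left_mem_Icc.2 hab))
  have hpl : IsPicardLindelof (fun t x => A t x) (⟨a, left_mem_Icc.2 hab⟩ : Icc a b) x₀
      ‖x₀‖₊ 0 ⟨2 * M * ‖x₀‖, by positivity⟩ ⟨M, hM₀⟩ := by
    refine ⟨fun t ht => ?_, fun x _ => ?_, fun t ht x hx => ?_, ?_⟩
    · exact (ContinuousLinearMap.lipschitzWith_of_opNorm_le (hM t ht)).lipschitzOnWith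
    · exact ((ContinuousLinearMap.apply ℝ E x).continuous.comp hA).continuousOn
    · have hx' : ‖x‖ ≤ 2 * ‖x₀‖ := by
        have := norm_le_norm_add_norm_sub' x x₀
        rw [mem_closedBall_iff_norm] at hx
        simp only [coe_nnnorm] at hx
        linarith
      calc ‖A t x‖ ≤ ‖A t‖ * ‖x‖ := (A t).le_opNorm x
        _ ≤ M * (2 * ‖x₀‖) := mul_le_mul (hM t ht) hx' (norm_nonneg _) hM₀
        _ = 2 * M * ‖x₀‖ := by ring
    · change 2 * M * ‖x₀‖ * max (b - a) (a - a) ≤ ‖x₀‖ - 0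
      rw [max_eq_left (by linarith)]
      nlinarith [norm_nonneg x₀]
  exact hpl.exists_eq_forall_mem_Icc_hasDerivWithinAt₀

theorem exists_isIntegralCurveOn_Icc_left_of_linear [CompleteSpace E] (hA : Continuous A)
    {a b : ℝ} (hab : a ≤ b) (x₀ : E) :
    ∃ α : ℝ → E, α a = x₀ ∧ IsIntegralCurveOn α (fun t x => A t x) (Icc a b) := by
  obtain ⟨M, hM⟩ := (isCompact_Icc (a := a) (b := b)).exists_bound_of_continuousOn hA.continuousOn
  have hM₀ : 0 ≤ M := (norm_nonneg _).trans (hM a (left_mem_Icc.2 hab))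
  set δ := 1 / (2 * M + 1) with hδ_def
  have hδ : 0 < δ := by positivity
  have hMδ : M * δ ≤ 1 / 2 := by
    rw [hδ_def, mul_one_div, div_le_div_iff₀ (by positivity) two_pos]
    linarith
  suffices key : ∀ n : ℕ, ∀ c ∈ Icc a b, b - c ≤ n * δ → ∀ x : E,
      ∃ α : ℝ → E, α c = x ∧ IsIntegralCurveOn α (fun t x => A t x) (Icc c b) from
    key ⌈(b - a) / δ⌉₊ a (left_mem_Icc.2 hab) ((div_le_iff₀ hδ).1 (Nat.le_ceil _)) x₀
  intro n
  induction n with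
  | zero =>
    intro c hc hcb x
    refine exists_isIntegralCurveOn_Icc_of_opNorm_le hA hc.2
      (fun t ht => hM t (Icc_subset_Icc hc.1 le_rfl ht)) ?_ x
    push_cast at hcb
    nlinarith
  | succ n ih =>
    intro c hc hcb x
    set m := min (c + δ) b
    have hcm : c ≤ m := le_min (by linarith) hc.2
    have hmb : m ≤ b := min_le_right _ _
    obtain ⟨α, hα, hαI⟩ := exists_isIntegralCurveOn_Icc_of_opNorm_le hA hcm
      (fun t ht => hM t (Icc_subset_Icc hc.1 hmb ht))
      (by nlinarith [min_le_left (c + δ) b]) x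
    obtain ⟨β, hβ, hβI⟩ := ih m ⟨hc.1.trans hcm, hmb⟩
      (by push_cast at hcb; rcases min_cases (c + δ) b with h | h <;> nlinarith) (α m)
    exact ⟨piecewise (Iic m) α β, by simp [piecewise, hcm, hα],
      hαI.piecewise_Icc hcm hmb hβI hβ.symm⟩

theorem exists_isIntegralCurveOn_Icc_of_linear [CompleteSpace E] (hA : Continuous A)
    {a b t₀ : ℝ} (ht₀ : t₀ ∈ Icc a b) (x₀ : E) :
    ∃ α : ℝ → E, α t₀ = x₀ ∧ IsIntegralCurveOn α (fun t x => A t x) (Icc a b) := by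
  obtain ⟨β, hβ₀, hβ⟩ := exists_isIntegralCurveOn_Icc_left_of_linear (A := fun t => -A (-t))
    (hA.comp continuous_neg).neg (neg_le_neg ht₀.1) x₀
  obtain ⟨γ, hγ₀, hγ⟩ := exists_isIntegralCurveOn_Icc_left_of_linear hA ht₀.2 x₀
  have hβ' : IsIntegralCurveOn (β ∘ (· * -1)) (fun t x => A t x) (Icc a t₀) := by
    convert hβ.comp_mul (-1) using 1
    · funext t x
      simp
    · ext t
      simp [and_comm]
  refine ⟨piecewise (Iic t₀) (β ∘ (· * -1)) γ, by simp [piecewise, hβ₀], ?_⟩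
  exact hβ'.piecewise_Icc ht₀.1 ht₀.2 hγ (by simp [hβ₀, hγ₀])

theorem IsIntegralCurveOn.eqOn_Icc_of_linear (hA : Continuous A) {γ₁ γ₂ : ℝ → E} {a b t₀ : ℝ}
    (h₁ : IsIntegralCurveOn γ₁ (fun t x => A t x) (Icc a b))
    (h₂ : IsIntegralCurveOn γ₂ (fun t x => A t x) (Icc a b)) (ht₀ : t₀ ∈ Ioo a b)
    (h : γ₁ t₀ = γ₂ t₀) : EqOn γ₁ γ₂ (Icc a b) := by
  obtain ⟨M, hM⟩ := (isCompact_Icc (a := a) (b := b)).exists_bound_of_continuousOn hA.continuousOn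
  have hlip (t : ℝ) (ht : t ∈ Ioo a b) : LipschitzOnWith M.toNNReal (A t) univ :=
    (ContinuousLinearMap.lipschitzWith_of_opNorm_le
      ((hM t (Ioo_subset_Icc_self ht)).trans (Real.le_coe_toNNReal M))).lipschitzOnWith
  have hderiv {γ : ℝ → E} (hγ : IsIntegralCurveOn γ (fun t x => A t x) (Icc a b)) (t : ℝ)
      (ht : t ∈ Ioo a b) : HasDerivAt γ (A t (γ t)) t :=
    (hγ.isIntegralCurveAt (Icc_mem_nhds ht.1 ht.2)).hasDerivAt
  exact ODE_solution_unique_of_mem_Icc hlip ht₀ h₁.continuousOn (hderiv h₁)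
    (fun _ _ => mem_univ _) h₂.continuousOn (hderiv h₂) (fun _ _ => mem_univ _) h

theorem exists_isIntegralCurve_of_linear [CompleteSpace E] (hA : Continuous A) (t₀ : ℝ)
    (x₀ : E) : ∃ γ : ℝ → E, γ t₀ = x₀ ∧ IsIntegralCurve γ (fun t x => A t x) := by
  set I : ℕ → Set ℝ := fun n => Icc (t₀ - (n + 1)) (t₀ + (n + 1))
  have ht₀I (n : ℕ) : t₀ ∈ Ioo (t₀ - (n + 1)) (t₀ + (n + 1)) := ⟨by linarith, by linarith⟩
  choose γ hγ₀ hγ using fun n : ℕ =>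
    exists_isIntegralCurveOn_Icc_of_linear hA (Ioo_subset_Icc_self (ht₀I n)) x₀
  have hmono {m n : ℕ} (hmn : m ≤ n) : EqOn (γ m) (γ n) (I m) := by
    have hsub : I m ⊆ I n := Icc_subset_Icc (by gcongr) (by gcongr)
    exact (hγ m).eqOn_Icc_of_linear hA ((hγ n).mono hsub) (ht₀I m) ((hγ₀ m).trans (hγ₀ n).symm)
  set Γ : ℝ → E := fun t => γ ⌈|t - t₀|⌉₊ t
  have hΓ (n : ℕ) : EqOn Γ (γ n) (I n) := by
    intro t ht
    have ht' : t ∈ I ⌈|t - t₀|⌉₊ := by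
      have := Nat.le_ceil |t - t₀|
      constructor <;> linarith [neg_abs_le (t - t₀), le_abs_self (t - t₀)]
    rcases le_total ⌈|t - t₀|⌉₊ n with h | h
    · exact hmono h ht'
    · exact (hmono h ht).symm
  refine ⟨Γ, by simp [Γ, hγ₀], fun t => ?_⟩
  have hmem : I ⌈|t - t₀|⌉₊ ∈ nhds t := by
    have := Nat.le_ceil |t - t₀|
    exact Icc_mem_nhds (by linarith [neg_abs_le (t - t₀)]) (by linarith [le_abs_self (t - t₀)])
  have hd := ((hγ _).isIntegralCurveAt hmem).hasDerivAt
  rw [← hΓ _ (mem_of_mem_nhds hmem)] at hd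
  exact hd.congr_of_eventuallyEq (Filter.eventually_of_mem hmem (hΓ _))

end LinearODE

/-- `u'' + K u = 0` as the first-order system `(u, u')' = jacobiOperator K t (u, u')`. -/
noncomputable def jacobiOperator (K : ℝ → ℝ) (t : ℝ) : ℝ × ℝ →L[ℝ] ℝ × ℝ :=
  (ContinuousLinearMap.snd ℝ ℝ ℝ).prod (-K t • ContinuousLinearMap.fst ℝ ℝ ℝ)

theorem continuous_jacobiOperator {K : ℝ → ℝ} (hK : Continuous K) :
    Continuous (jacobiOperator K) :=
  (ContinuousLinearMap.prodₗᵢ ℝ).continuous.comp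
    (continuous_const.prodMk (hK.neg.smul continuous_const))

theorem contDiff_two_of_hasDerivAt {K u w : ℝ → ℝ} (hK : Continuous K)
    (hu : ∀ t, HasDerivAt u (w t) t) (hw : ∀ t, HasDerivAt w (-(K t * u t)) t) :
    ContDiff ℝ 2 u := by
  have hu' : deriv u = w := funext fun t => (hu t).deriv
  have hw' : deriv w = fun t => -(K t * u t) := funext fun t => (hw t).deriv
  have hud : Differentiable ℝ u := fun t => (hu t).differentiableAt
  rw [show (2 : WithTop ℕ∞) = 1 + 1 from rfl, contDiff_succ_iff_deriv, hu', contDiff_one_iff_deriv,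
    hw']
  exact ⟨hud, by simp, fun t => (hw t).differentiableAt, (hK.mul hud.continuous).neg⟩

theorem deriv_deriv_add_mul_eq_zero_of_hasDerivAt {K u w : ℝ → ℝ}
    (hu : ∀ t, HasDerivAt u (w t) t) (hw : ∀ t, HasDerivAt w (-(K t * u t)) t) (t : ℝ) :
    deriv (deriv u) t + K t * u t = 0 := by
  rw [show deriv u = w from funext fun t => (hu t).deriv, (hw t).deriv, neg_add_cancel]

theorem exists_jacobiField {K : ℝ → ℝ} (hK : Continuous K) (a₀ : ℝ) :
    ∃ u w : ℝ → ℝ, u a₀ = 0 ∧ w a₀ = 1 ∧ (∀ t, HasDerivAt u (w t) t) ∧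
      ∀ t, HasDerivAt w (-(K t * u t)) t := by
  obtain ⟨γ, hγ₀, hγ⟩ := exists_isIntegralCurve_of_linear (continuous_jacobiOperator hK) a₀ (0, 1)
  refine ⟨fun t => (γ t).1, fun t => (γ t).2, by simp [hγ₀], by simp [hγ₀], fun t => ?_,
    fun t => ?_⟩
  · exact (ContinuousLinearMap.fst ℝ ℝ ℝ).hasFDerivAt.comp_hasDerivAt t (hγ t)
  · exact ((ContinuousLinearMap.snd ℝ ℝ ℝ).hasFDerivAt.comp_hasDerivAt t (hγ t)).congr_deriv
      (by simp [jacobiOperator])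

theorem integral_mul_sq_le_integral_deriv_sq_of_ne_zero {K u w f : ℝ → ℝ} {c d : ℝ}
    (hcd : c ≤ d) (hK : ContinuousOn K (Icc c d)) (hu : ∀ t ∈ Icc c d, HasDerivAt u (w t) t)
    (hw : ∀ t ∈ Icc c d, HasDerivAt w (-(K t * u t)) t) (hu₀ : ∀ t ∈ Icc c d, u t ≠ 0)
    (hf : ContDiff ℝ 1 f) (hfc : f c = 0) (hfd : f d = 0) :
    ∫ t in c..d, K t * f t ^ 2 ≤ ∫ t in c..d, deriv f t ^ 2 := by
  set q : ℝ → ℝ := fun t => deriv f t - w t / u t * f t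
  have hf' (t : ℝ) : HasDerivAt f (deriv f t) t :=
    (hf.differentiable one_ne_zero t).hasDerivAt
  have hpicone (t : ℝ) (ht : t ∈ Icc c d) : HasDerivAt (fun t => w t * f t ^ 2 / u t)
      (deriv f t ^ 2 - K t * f t ^ 2 - q t ^ 2) t := by
    refine (((hw t ht).mul ((hf' t).pow 2)).div (hu t ht) (hu₀ t ht)).congr_deriv ?_
    have hut := hu₀ t ht
    simp only [q, Pi.mul_apply, Pi.pow_apply]
    field_simp
    ring
  have hcont_u : ContinuousOn u (Icc c d) := fun t ht => (hu t ht).continuousAt.continuousWithinAt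
  have hcont_w : ContinuousOn w (Icc c d) := fun t ht => (hw t ht).continuousAt.continuousWithinAt
  have hcont_f := hf.continuous
  have hcont_f' := hf.continuous_deriv le_rfl
  have hcont_q : ContinuousOn q (Icc c d) :=
    hcont_f'.continuousOn.sub ((hcont_w.div hcont_u hu₀).mul hcont_f.continuousOn)
  have hint {g : ℝ → ℝ} (hg : ContinuousOn g (Icc c d)) : IntervalIntegrable g volume c d :=
    hg.intervalIntegrable_of_Icc hcd
  have hKf : ContinuousOn (fun t => K t * f t ^ 2) (Icc c d) := hK.mul (hcont_f.pow 2).continuousOn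
  have hf'2 : ContinuousOn (fun t => deriv f t ^ 2) (Icc c d) := (hcont_f'.pow 2).continuousOn
  have hD : ContinuousOn (fun t => deriv f t ^ 2 - K t * f t ^ 2 - q t ^ 2) (Icc c d) :=
    (hf'2.sub hKf).sub (hcont_q.pow 2)
  calc ∫ t in c..d, K t * f t ^ 2
      = (∫ t in c..d, K t * f t ^ 2) +
          ∫ t in c..d, (deriv f t ^ 2 - K t * f t ^ 2 - q t ^ 2) := by
        rw [intervalIntegral.integral_eq_sub_of_hasDerivAt
          (fun t ht => hpicone t (by rwa [uIcc_of_le hcd] at ht)) (hint hD), hfc, hfd]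
        simp
    _ = ∫ t in c..d, (deriv f t ^ 2 - q t ^ 2) := by
        rw [← intervalIntegral.integral_add (hint hKf) (hint hD)]
        ring_nf
    _ ≤ ∫ t in c..d, deriv f t ^ 2 :=
        intervalIntegral.integral_mono_on hcd (hint (hf'2.sub (hcont_q.pow 2))) (hint hf'2)
          (fun t _ => sub_le_self _ (sq_nonneg _))

/-- A complete geodesic with no Jacobi field having more than one zero is stable. -/
theorem stmt8 (K : ℝ → ℝ) (hK : Continuous K)
    (hnozeros : ∀ u : ℝ → ℝ, ContDiff ℝ 2 u →
      (∀ t, deriv (deriv u) t + K t * u t = 0) →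
      ∀ a b : ℝ, a ≠ b → u a = 0 → u b = 0 → u = 0) :
    ∀ f : ℝ → ℝ, ContDiff ℝ 1 f → HasCompactSupport f →
      (∫ t, K t * (f t) ^ 2) ≤ ∫ t, (deriv f t) ^ 2 := by
  intro f hf hsupp
  obtain ⟨R, hR, hsupp_R⟩ := hsupp.isCompact.isBounded.subset_ball_lt 0 0
  rw [Real.ball_eq_Ioo, zero_sub, zero_add] at hsupp_R
  obtain ⟨u, w, hu₀, hw₀, hu, hw⟩ := exists_jacobiField hK (-R - 1)
  have hu_ne (t : ℝ) (ht : t ∈ Icc (-R) R) : u t ≠ 0 := fun hut => by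
    have hzero := hnozeros u (contDiff_two_of_hasDerivAt hK hu hw)
      (deriv_deriv_add_mul_eq_zero_of_hasDerivAt hu hw) (-R - 1) t (by linarith [ht.1]) hu₀ hut
    subst hzero
    exact one_ne_zero (hw₀ ▸ (hu (-R - 1)).unique (hasDerivAt_const _ _))
  have hint {g : ℝ → ℝ} (hg : Function.support g ⊆ tsupport f) : ∫ t, g t = ∫ t in -R..R, g t :=
    (intervalIntegral.integral_eq_integral_of_support_subset
      (hg.trans (hsupp_R.trans Ioo_subset_Ioc_self))).symm
  rw [hint (g := fun t => K t * f t ^ 2) fun t ht => subset_tsupport f fun h => ht (by simp [h]),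
    hint (g := fun t => deriv f t ^ 2) fun t ht => support_deriv_subset fun h => ht (by simp [h])]
  have hfc : f (-R) = 0 := image_eq_zero_of_notMem_tsupport fun h => (hsupp_R h).1.false
  have hfd : f R = 0 := image_eq_zero_of_notMem_tsupport fun h => (hsupp_R h).2.false
  exact integral_mul_sq_le_integral_deriv_sq_of_ne_zero (by linarith) hK.continuousOn
    (fun t _ => hu t) (fun t _ => hw t) hu_ne hf hfc hfd
end
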